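/- arXiv:1411.2978 — 2 statements merged into one kernel-verified Lean document; each statement's English description precedes it below -/
import Mathlib

section
/- Let D be a contractive distance on two-qubit density matrices. Let c1, c3 ∈ [-1,1] and let z be a real number with c3 + z ∈ [-1,1]. Then D(ρ(c1,-c1·c3,c3), ρ(0,0,c3)) ≤ D(ρ(c1,-c1·c3,c3), ρ(0,0,c3+z)). That is, among BD classical states on the c3-axis, the closest one to the freezing-surface state ρ(c1,-c1·c3,c3) is its orthogonal projection ρ(0,0,c3). -/
open Matrix Kronecker
open scoped ComplexOrder

noncomputable section

/-- 2×2 complex matrices (single-qubit operators). -/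
abbrev Mat2 := Matrix (Fin 2) (Fin 2) ℂ

/-- 4×4 complex matrices (two-qubit operators), indexed by `Fin 2 × Fin 2`. -/
abbrev Mat4 := Matrix (Fin 2 × Fin 2) (Fin 2 × Fin 2) ℂ

/-- Pauli matrix σ₁ (x). -/
def σ1 : Mat2 := !![0, 1; 1, 0]

/-- Pauli matrix σ₂ (y). -/
def σ2 : Mat2 := !![0, -Complex.I; Complex.I, 0]

/-- Pauli matrix σ₃ (z). -/
def σ3 : Mat2 := !![1, 0; 0, -1]

/-- The Bell-diagonal state ρ(c1,c2,c3) = (1/4)(I₄ + c1 σ₁⊗σ₁ + c2 σ₂⊗σ₂ + c3 σ₃⊗σ₃). -/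
def BD (c1 c2 c3 : ℝ) : Mat4 :=
  (1 / 4 : ℂ) • ((1 : Mat4) + (c1 : ℂ) • (σ1 ⊗ₖ σ1) + (c2 : ℂ) • (σ2 ⊗ₖ σ2)
    + (c3 : ℂ) • (σ3 ⊗ₖ σ3))

/-- A two-qubit density matrix: positive semidefinite with unit trace. -/
def IsDensityMatrix (ρ : Mat4) : Prop := ρ.PosSemidef ∧ ρ.trace = 1

/-- A CPTP map given by finitely many Kraus operators. -/
def IsCPTP (Λ : Mat4 → Mat4) : Prop :=
  ∃ (n : ℕ) (K : Fin n → Mat4),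
    (∑ i, (K i)ᴴ * K i) = 1 ∧ ∀ X, Λ X = ∑ i, K i * X * (K i)ᴴ

/-- A distance `D` is contractive if it contracts under every CPTP map. -/
def Contractive (D : Mat4 → Mat4 → ℝ) : Prop :=
  ∀ Λ : Mat4 → Mat4, IsCPTP Λ → ∀ ρ σ : Mat4,
    IsDensityMatrix ρ → IsDensityMatrix σ → D (Λ ρ) (Λ σ) ≤ D ρ σ

/-- A distance `D` is invariant under transposition. -/
def TransposeInvariant (D : Mat4 → Mat4 → ℝ) : Prop :=
  ∀ ρ σ : Mat4, IsDensityMatrix ρ → IsDensityMatrix σ → D ρᵀ σᵀ = D ρ σ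

/-- A distance `D` is jointly convex. -/
def JointlyConvex (D : Mat4 → Mat4 → ℝ) : Prop :=
  ∀ q : ℝ, 0 ≤ q → q ≤ 1 → ∀ ρ σ τ ς : Mat4,
    IsDensityMatrix ρ → IsDensityMatrix σ → IsDensityMatrix τ → IsDensityMatrix ς →
    D (q • ρ + (1 - q) • σ) (q • τ + (1 - q) • ς) ≤ q * D ρ τ + (1 - q) * D σ ς

/-- A classical-classical two-qubit state: ∑ᵢⱼ pᵢⱼ |aᵢ⟩⟨aᵢ| ⊗ |bⱼ⟩⟨bⱼ| with (pᵢⱼ) a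
probability distribution and {aᵢ}, {bⱼ} orthonormal bases of ℂ². -/
def IsClassical (χ : Mat4) : Prop :=
  ∃ (p : Fin 2 → Fin 2 → ℝ) (a b : Fin 2 → Fin 2 → ℂ),
    (∀ i j, 0 ≤ p i j) ∧ (∑ i, ∑ j, p i j = 1) ∧
    (∀ i i', ∑ k, (starRingEnd ℂ) (a i k) * a i' k = if i = i' then 1 else 0) ∧
    (∀ j j', ∑ k, (starRingEnd ℂ) (b j k) * b j' k = if j = j' then 1 else 0) ∧
    χ = ∑ i, ∑ j, (p i j : ℂ) •
      (Matrix.vecMulVec (a i) (star (a i)) ⊗ₖ Matrix.vecMulVec (b j) (star (b j)))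

/-- Membership in the tetrahedron of Bell-diagonal states. -/
def InTetra (c : ℝ × ℝ × ℝ) : Prop :=
  c ∈ convexHull ℝ
    ({((1 : ℝ), (-1 : ℝ), (1 : ℝ)), ((-1 : ℝ), (1 : ℝ), (1 : ℝ)),
      ((1 : ℝ), (1 : ℝ), (-1 : ℝ)), ((-1 : ℝ), (-1 : ℝ), (-1 : ℝ))} : Set (ℝ × ℝ × ℝ))

/-- Geometric discord: distance to the set of classical states. -/
def QD (D : Mat4 → Mat4 → ℝ) (ρ : Mat4) : ℝ :=
  sInf {x : ℝ | ∃ χ : Mat4, IsClassical χ ∧ x = D ρ χ}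

/-- The Pauli matrices, indexed. -/
def pauli : Fin 3 → Mat2 := ![σ1, σ2, σ3]

/-!
The proof exhibits one channel. For `c ∈ [-1, 1]`, let `Λ_c` move the state, with probability
`(1 + c) / 2`, into the even-parity subspace `span {|00⟩, |11⟩}` (keeping its even block and
bringing the odd block over by `1 ⊗ σ₁`), and otherwise into the odd-parity subspace in the same
way. On Bell-diagonal states the coherence `c1` survives while `c2` and `c3` are overwritten:
`Λ_c ρ(a, b, s) = ρ(a, -a c, c)`. So `Λ_{c3}` fixes `ρ(c1, -c1 c3, c3)` and sends every
`ρ(0, 0, c3 + z)` to `ρ(0, 0, c3)`, and contractivity of `D` under `Λ_{c3}` is the claim.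
-/

/-- Rows and columns are ordered `|00⟩, |01⟩, |10⟩, |11⟩`, since `finProdFinEquiv (i, k) = 2 i + k`. -/
def twoQubit (A : Matrix (Fin 4) (Fin 4) ℂ) : Mat4 :=
  A.submatrix finProdFinEquiv finProdFinEquiv

theorem BD_eq_twoQubit (c1 c2 c3 : ℝ) :
    BD c1 c2 c3 = twoQubit !![(1 + c3) / 4, 0, 0, (c1 - c2) / 4;
                              0, (1 - c3) / 4, (c1 + c2) / 4, 0;
                              0, (c1 + c2) / 4, (1 - c3) / 4, 0;
                              (c1 - c2) / 4, 0, 0, (1 + c3) / 4] := by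
  ext ⟨i, k⟩ ⟨j, l⟩
  fin_cases i <;> fin_cases k <;> fin_cases j <;> fin_cases l <;>
    simp [BD, twoQubit, σ1, σ2, σ3, one_apply, finProdFinEquiv] <;> ring

/-- Unnormalised (squared norm `2`), which is why `BD_eq_sum_bell` divides the weights by `8`. -/
def bellVector : Fin 4 → Fin 4 → ℂ :=
  ![![1, 0, 0, 1], ![1, 0, 0, -1], ![0, 1, 1, 0], ![0, 1, -1, 0]]

def bellWeight (c1 c2 c3 : ℝ) : Fin 4 → ℝ :=
  ![1 + c1 - c2 + c3, 1 - c1 + c2 + c3, 1 + c1 + c2 - c3, 1 - c1 - c2 - c3]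

theorem BD_eq_sum_bell (c1 c2 c3 : ℝ) :
    BD c1 c2 c3 = twoQubit
      (∑ i, (bellWeight c1 c2 c3 i / 8) • vecMulVec (bellVector i) (star (bellVector i))) := by
  rw [BD_eq_twoQubit, twoQubit, twoQubit]
  congr 1
  ext i j
  simp only [Matrix.sum_apply, Matrix.smul_apply, vecMulVec_apply, Pi.star_apply]
  fin_cases i <;> fin_cases j <;> simp [bellVector, bellWeight, Fin.sum_univ_four] <;> ring

theorem posSemidef_BD {c1 c2 c3 : ℝ} (h : ∀ i, 0 ≤ bellWeight c1 c2 c3 i) :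
    (BD c1 c2 c3).PosSemidef := by
  rw [BD_eq_sum_bell, twoQubit, posSemidef_submatrix_equiv]
  exact posSemidef_sum _ fun i _ ↦ (posSemidef_vecMulVec_self_star _).smul (by linarith [h i])

theorem trace_BD (c1 c2 c3 : ℝ) : (BD c1 c2 c3).trace = 1 := by
  simp [BD_eq_twoQubit, twoQubit, trace, Fintype.sum_prod_type, finProdFinEquiv]
  ring

theorem isDensityMatrix_BD {c1 c2 c3 : ℝ} (h : ∀ i, 0 ≤ bellWeight c1 c2 c3 i) :
    IsDensityMatrix (BD c1 c2 c3) :=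
  ⟨posSemidef_BD h, trace_BD c1 c2 c3⟩

theorem bellWeight_freezing (c1 c3 : ℝ) :
    bellWeight c1 (-(c1 * c3)) c3 =
      ![(1 + c1) * (1 + c3), (1 - c1) * (1 + c3), (1 + c1) * (1 - c3), (1 - c1) * (1 - c3)] := by
  ext i
  fin_cases i <;> dsimp [bellWeight] <;> ring

theorem isDensityMatrix_BD_freezing {c1 c3 : ℝ} (hc1 : c1 ∈ Set.Icc (-1 : ℝ) 1)
    (hc3 : c3 ∈ Set.Icc (-1 : ℝ) 1) : IsDensityMatrix (BD c1 (-(c1 * c3)) c3) := by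
  obtain ⟨hc1l, hc1u⟩ := hc1
  obtain ⟨hc3l, hc3u⟩ := hc3
  refine isDensityMatrix_BD fun i ↦ ?_
  rw [bellWeight_freezing]
  fin_cases i <;> dsimp <;> apply mul_nonneg <;> linarith

theorem isDensityMatrix_BD_axis {a : ℝ} (ha : a ∈ Set.Icc (-1 : ℝ) 1) :
    IsDensityMatrix (BD 0 0 a) := by
  refine isDensityMatrix_BD fun i ↦ ?_
  fin_cases i <;> dsimp [bellWeight] <;> linarith [ha.1, ha.2]

theorem isCPTP_weighted_conj {n : ℕ} (w : Fin n → ℝ) (hw : ∀ i, 0 ≤ w i) (P : Fin n → Mat4)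
    (hP : ∑ i, (w i : ℂ) • ((P i)ᴴ * P i) = 1) :
    IsCPTP fun X ↦ ∑ i, (w i : ℂ) • (P i * X * (P i)ᴴ) := by
  have hsq : ∀ i, star (√(w i) : ℂ) * (√(w i) : ℂ) = w i := fun i ↦ by
    rw [Complex.star_def, Complex.conj_ofReal, ← Complex.ofReal_mul, Real.mul_self_sqrt (hw i)]
  refine ⟨n, fun i ↦ (√(w i) : ℂ) • P i, ?_, fun X ↦ ?_⟩
  · simp only [conjTranspose_smul, smul_mul_smul_comm, hsq, hP]
  · simp only [conjTranspose_smul, smul_mul_assoc, mul_smul_comm, smul_smul, hsq]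

theorem Contractive.le_of_map_eq_self {D : Mat4 → Mat4 → ℝ} (hD : Contractive D)
    {Λ : Mat4 → Mat4} (hΛ : IsCPTP Λ) {ρ σ : Mat4} (hρ : IsDensityMatrix ρ)
    (hσ : IsDensityMatrix σ) (hfix : Λ ρ = ρ) : D ρ (Λ σ) ≤ D ρ σ := by
  simpa only [hfix] using hD Λ hΛ ρ σ hρ hσ

/-- `P_even`, `(1 ⊗ σ₁) P_odd`, `(σ₁ ⊗ σ₁) P_odd` and `(1 ⊗ σ₁) P_even`. -/
def parityKraus : Fin 4 → Mat4 :=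
  ![twoQubit !![1, 0, 0, 0; 0, 0, 0, 0; 0, 0, 0, 0; 0, 0, 0, 1],
    twoQubit !![0, 1, 0, 0; 0, 0, 0, 0; 0, 0, 0, 0; 0, 0, 1, 0],
    twoQubit !![0, 0, 0, 0; 0, 0, 1, 0; 0, 1, 0, 0; 0, 0, 0, 0],
    twoQubit !![0, 0, 0, 0; 1, 0, 0, 0; 0, 0, 0, 1; 0, 0, 0, 0]]

def parityWeight (c : ℝ) : Fin 4 → ℝ := ![(1 + c) / 2, (1 + c) / 2, (1 - c) / 2, (1 - c) / 2]

def parityChannel (c : ℝ) (X : Mat4) : Mat4 :=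
  ∑ i, (parityWeight c i : ℂ) • (parityKraus i * X * (parityKraus i)ᴴ)

theorem sum_parityWeight_smul_conjTranspose_mul_parityKraus (c : ℝ) :
    ∑ i, (parityWeight c i : ℂ) • ((parityKraus i)ᴴ * parityKraus i) = 1 := by
  ext ⟨i, k⟩ ⟨j, l⟩
  fin_cases i <;> fin_cases k <;> fin_cases j <;> fin_cases l <;>
    simp [parityKraus, parityWeight, twoQubit, Fin.sum_univ_four, mul_apply,
      Fintype.sum_prod_type, finProdFinEquiv, one_apply] <;> ring

theorem isCPTP_parityChannel {c : ℝ} (hc : c ∈ Set.Icc (-1 : ℝ) 1) :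
    IsCPTP (parityChannel c) := by
  refine isCPTP_weighted_conj _ (fun i ↦ ?_) _
    (sum_parityWeight_smul_conjTranspose_mul_parityKraus c)
  fin_cases i <;> dsimp [parityWeight] <;> linarith [hc.1, hc.2]

theorem parityChannel_BD (c a b s : ℝ) : parityChannel c (BD a b s) = BD a (-(a * c)) c := by
  rw [BD_eq_twoQubit, BD_eq_twoQubit]
  ext ⟨i, k⟩ ⟨j, l⟩
  fin_cases i <;> fin_cases k <;> fin_cases j <;> fin_cases l <;>
    simp [parityChannel, parityKraus, parityWeight, twoQubit, Fin.sum_univ_four, mul_apply,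
      Fintype.sum_prod_type, finProdFinEquiv] <;> ring

/-- among BD classical states on the c3-axis, the closest one to
ρ(c1,-c1·c3,c3) is its orthogonal projection ρ(0,0,c3). -/
theorem closest_on_c3_axis_is_projection
    (D : Mat4 → Mat4 → ℝ) (hD : Contractive D)
    (c1 c3 z : ℝ) (hc1 : c1 ∈ Set.Icc (-1 : ℝ) 1) (hc3 : c3 ∈ Set.Icc (-1 : ℝ) 1)
    (hz : c3 + z ∈ Set.Icc (-1 : ℝ) 1) :
    D (BD c1 (-(c1 * c3)) c3) (BD 0 0 c3)
      ≤ D (BD c1 (-(c1 * c3)) c3) (BD 0 0 (c3 + z)) := by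
  have hfix : parityChannel c3 (BD c1 (-(c1 * c3)) c3) = BD c1 (-(c1 * c3)) c3 :=
    parityChannel_BD c3 c1 _ c3
  have hproj : parityChannel c3 (BD 0 0 (c3 + z)) = BD 0 0 c3 := by
    simpa using parityChannel_BD c3 0 0 (c3 + z)
  simpa only [hproj] using hD.le_of_map_eq_self (isCPTP_parityChannel hc3)
    (isDensityMatrix_BD_freezing hc1 hc3) (isDensityMatrix_BD_axis hz) hfix
end
end

section
/- Let D be a contractive distance on two-qubit density matrices. If c1, c3 ∈ [-1,1] satisfy |c1| = |c3|, then D(ρ(c1,0,0), ρ(0,0,0)) = D(ρ(0,0,c3), ρ(0,0,0)), where ρ(0,0,0) = I4/4 is the maximally mixed state. -/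
open Matrix Kronecker
open scoped ComplexOrder

noncomputable section

/-!
The Hadamard gate `H` conjugates `σ₁` to `σ₃`, and `σ₁ H` conjugates it to `-σ₃`. Hence, when
`|c₁| = |c₃|`, one of the unitaries `H ⊗ H` and `σ₁ H ⊗ H` carries `ρ(c₁,0,0)` to `ρ(0,0,c₃)`,
and every unitary fixes the maximally mixed state. Conjugation by a unitary `U` is a CPTP map
undone by conjugation by `Uᴴ`, so a contractive distance is invariant under it.
-/

namespace Matrix

theorem neg_kronecker {R l m n p : Type*} [Ring R] (A : Matrix l m R) (B : Matrix n p R) :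
    (-A) ⊗ₖ B = -(A ⊗ₖ B) := by
  ext; simp

section Kronecker

variable {R : Type*} [CommRing R] [StarRing R] {m n : Type*} [Fintype m] [Fintype n]

theorem kronecker_conj (U A : Matrix n n R) (V B : Matrix m m R) :
    (U ⊗ₖ V) * (A ⊗ₖ B) * (U ⊗ₖ V)ᴴ = (U * A * Uᴴ) ⊗ₖ (V * B * Vᴴ) := by
  rw [conjTranspose_kronecker, ← mul_kronecker_mul, ← mul_kronecker_mul]

theorem unitary_conj_smul_one_add_smul [DecidableEq n] {U : Matrix n n R}
    (hU : U ∈ unitary (Matrix n n R)) (r c : R) (A : Matrix n n R) :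
    U * (r • (1 + c • A)) * Uᴴ = r • (1 + c • (U * A * Uᴴ)) := by
  rw [Matrix.mul_smul, Matrix.smul_mul, mul_add, add_mul, mul_one, Matrix.mul_smul,
    Matrix.smul_mul, show U * Uᴴ = 1 from Unitary.mul_star_self_of_mem hU]

end Kronecker

variable {𝕜 n : Type*} [RCLike 𝕜] [Fintype n] [DecidableEq n]

theorem posSemidef_one_add_of_involutive {A : Matrix n n 𝕜} (hA : A.IsHermitian)
    (hAA : A * A = 1) : (1 + A).PosSemidef := by
  have hsq : 1 + A = (1 / 2 : ℝ) • ((1 + A)ᴴ * (1 + A)) := by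
    simp only [conjTranspose_add, conjTranspose_one, hA.eq, add_mul, mul_add, hAA, one_mul,
      mul_one]
    module
  rw [hsq]
  exact (posSemidef_conjTranspose_mul_self _).smul (by norm_num)

theorem posSemidef_one_add_smul_of_involutive {A : Matrix n n 𝕜} (hA : A.IsHermitian)
    (hAA : A * A = 1) {a : ℝ} (ha : a ∈ Set.Icc (-1 : ℝ) 1) :
    (1 + (a : 𝕜) • A).PosSemidef := by
  have hsplit : 1 + (a : 𝕜) • A = ((1 + a) / 2) • (1 + A) + ((1 - a) / 2) • (1 + -A) := by
    rw [← RCLike.real_smul_eq_coe_smul]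
    module
  rw [hsplit]
  exact ((posSemidef_one_add_of_involutive hA hAA).smul (by linarith [ha.1])).add
    ((posSemidef_one_add_of_involutive hA.neg (by rw [neg_mul_neg, hAA])).smul
      (by linarith [ha.2]))

end Matrix

theorem σ1_isHermitian : σ1.IsHermitian := by
  ext i j; fin_cases i <;> fin_cases j <;> simp [σ1]

theorem σ1_mul_σ1 : σ1 * σ1 = 1 := by
  simp [σ1, Matrix.one_fin_two]

theorem σ1_mem_unitary : σ1 ∈ unitary Mat2 :=
  Matrix.mem_unitaryGroup_iff'.mpr <| by
    rw [star_eq_conjTranspose, σ1_isHermitian.eq, σ1_mul_σ1]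

theorem σ1_mul_σ3_mul_σ1 : σ1 * σ3 * σ1 = -σ3 := by
  simp [σ1, σ3]

theorem trace_σ1 : σ1.trace = 0 := by
  simp [σ1, Matrix.trace_fin_two]

def hadamardGate : Mat2 := ((Real.sqrt 2 : ℂ)⁻¹) • !![1, 1; 1, -1]

theorem star_sqrt_two_inv_mul_self : star (Real.sqrt 2 : ℂ)⁻¹ * (Real.sqrt 2 : ℂ)⁻¹ = 1 / 2 := by
  rw [star_inv₀, Complex.star_def, Complex.conj_ofReal, ← mul_inv, ← Complex.ofReal_mul,
    Real.mul_self_sqrt zero_le_two]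
  norm_num

theorem hadamardGate_mem_unitary : hadamardGate ∈ unitary Mat2 := by
  refine Matrix.mem_unitaryGroup_iff'.mpr ?_
  rw [hadamardGate, star_smul, smul_mul_smul_comm, star_sqrt_two_inv_mul_self]
  ext i j
  fin_cases i <;> fin_cases j <;> simp [Matrix.mul_apply, Fin.sum_univ_two] <;> norm_num

theorem hadamardGate_conj_σ1 : hadamardGate * σ1 * hadamardGateᴴ = σ3 := by
  have hstar : star !![(1 : ℂ), 1; 1, -1] = !![1, 1; 1, -1] := by
    ext i j; fin_cases i <;> fin_cases j <;> simp
  rw [← Matrix.star_eq_conjTranspose, hadamardGate, star_smul, hstar, Matrix.smul_mul,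
    Matrix.smul_mul, Matrix.mul_smul, smul_smul, mul_comm, star_sqrt_two_inv_mul_self]
  ext i j
  fin_cases i <;> fin_cases j <;> simp [σ1, σ3] <;> norm_num

theorem σ1_mul_hadamardGate_conj_σ1 :
    (σ1 * hadamardGate) * σ1 * (σ1 * hadamardGate)ᴴ = -σ3 := by
  rw [conjTranspose_mul, σ1_isHermitian.eq, show σ1 * hadamardGate * σ1 * (hadamardGateᴴ * σ1)
    = σ1 * (hadamardGate * σ1 * hadamardGateᴴ) * σ1 by simp only [mul_assoc],
    hadamardGate_conj_σ1, σ1_mul_σ3_mul_σ1]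

theorem isCPTP_unitary_conj {U : Mat4} (hU : U ∈ unitary Mat4) :
    IsCPTP (fun X => U * X * Uᴴ) := by
  have hUU : Uᴴ * U = 1 := Unitary.star_mul_self_of_mem hU
  exact ⟨1, fun _ => U, by simpa using hUU, fun X => by simp⟩

theorem IsDensityMatrix.unitary_conj {ρ U : Mat4} (hρ : IsDensityMatrix ρ)
    (hU : U ∈ unitary Mat4) : IsDensityMatrix (U * ρ * Uᴴ) :=
  ⟨hρ.1.mul_mul_conjTranspose_same U, by
    rw [trace_mul_cycle, show Uᴴ * U = 1 from Unitary.star_mul_self_of_mem hU, one_mul, hρ.2]⟩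

theorem Contractive.unitary_conj_eq {D : Mat4 → Mat4 → ℝ} (hD : Contractive D) {U : Mat4}
    (hU : U ∈ unitary Mat4) {ρ σ : Mat4} (hρ : IsDensityMatrix ρ) (hσ : IsDensityMatrix σ) :
    D (U * ρ * Uᴴ) (U * σ * Uᴴ) = D ρ σ := by
  have hUU : Uᴴ * U = 1 := Unitary.star_mul_self_of_mem hU
  have hundo : ∀ τ : Mat4, Uᴴ * (U * τ * Uᴴ) * Uᴴᴴ = τ := fun τ => by
    rw [conjTranspose_conjTranspose, ← mul_assoc, ← mul_assoc, hUU, one_mul, mul_assoc, hUU,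
      mul_one]
  have hU' : Uᴴ ∈ unitary Mat4 := Unitary.star_mem hU
  refine le_antisymm (hD _ (isCPTP_unitary_conj hU) ρ σ hρ hσ) ?_
  simpa only [hundo] using hD _ (isCPTP_unitary_conj hU') _ _
    (hρ.unitary_conj hU) (hσ.unitary_conj hU)

theorem BD_xx_eq (c : ℝ) : BD c 0 0 = (1 / 4 : ℂ) • (1 + (c : ℂ) • (σ1 ⊗ₖ σ1)) := by
  simp [BD]

theorem BD_zz_eq (c : ℝ) : BD 0 0 c = (1 / 4 : ℂ) • (1 + (c : ℂ) • (σ3 ⊗ₖ σ3)) := by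
  simp [BD]

theorem isDensityMatrix_BD_xx {c : ℝ} (hc : c ∈ Set.Icc (-1 : ℝ) 1) :
    IsDensityMatrix (BD c 0 0) := by
  have hxx : (σ1 ⊗ₖ σ1).IsHermitian := by
    rw [IsHermitian, conjTranspose_kronecker, σ1_isHermitian.eq]
  have hxx_sq : (σ1 ⊗ₖ σ1) * (σ1 ⊗ₖ σ1) = 1 := by
    rw [← mul_kronecker_mul, σ1_mul_σ1, one_kronecker_one]
  rw [BD_xx_eq]
  refine ⟨(posSemidef_one_add_smul_of_involutive hxx hxx_sq hc).smul
    (by norm_num [Complex.le_def]), ?_⟩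
  simp [trace_kronecker, trace_σ1]

theorem unitary_conj_BD_zero {U : Mat4} (hU : U ∈ unitary Mat4) :
    U * BD 0 0 0 * Uᴴ = BD 0 0 0 := by
  have hBD : BD 0 0 0 = (1 / 4 : ℂ) • (1 + (0 : ℂ) • (σ3 ⊗ₖ σ3)) := by simp [BD]
  rw [hBD, unitary_conj_smul_one_add_smul hU, zero_smul, zero_smul]

theorem exists_unitary_conj_BD_xx_eq_BD_zz {c1 c3 : ℝ} (h : |c1| = |c3|) :
    ∃ U ∈ unitary Mat4, U * BD c1 0 0 * Uᴴ = BD 0 0 c3 := by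
  rw [BD_xx_eq, BD_zz_eq]
  have hH := hadamardGate_mem_unitary
  rcases abs_eq_abs.mp h with rfl | rfl
  · refine ⟨hadamardGate ⊗ₖ hadamardGate, kronecker_mem_unitary hH hH, ?_⟩
    rw [unitary_conj_smul_one_add_smul (kronecker_mem_unitary hH hH), kronecker_conj,
      hadamardGate_conj_σ1]
  · have hσH : σ1 * hadamardGate ∈ unitary Mat2 := Submonoid.mul_mem _ σ1_mem_unitary hH
    refine ⟨(σ1 * hadamardGate) ⊗ₖ hadamardGate, kronecker_mem_unitary hσH hH, ?_⟩
    rw [unitary_conj_smul_one_add_smul (kronecker_mem_unitary hσH hH), kronecker_conj,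
      σ1_mul_hadamardGate_conj_σ1, hadamardGate_conj_σ1, neg_kronecker, Complex.ofReal_neg,
      neg_smul_neg]

theorem equidistant_from_maximally_mixed_general
    (D : Mat4 → Mat4 → ℝ) (hD : Contractive D)
    (c1 c3 : ℝ) (hc1 : c1 ∈ Set.Icc (-1 : ℝ) 1)
    (h : |c1| = |c3|) :
    D (BD c1 0 0) (BD 0 0 0) = D (BD 0 0 c3) (BD 0 0 0) := by
  obtain ⟨U, hU, hconj⟩ := exists_unitary_conj_BD_xx_eq_BD_zz h
  have hρ₀ : IsDensityMatrix (BD 0 0 0) := isDensityMatrix_BD_xx ⟨by norm_num, by norm_num⟩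
  calc D (BD c1 0 0) (BD 0 0 0)
      = D (U * BD c1 0 0 * Uᴴ) (U * BD 0 0 0 * Uᴴ) :=
        (hD.unitary_conj_eq hU (isDensityMatrix_BD_xx hc1) hρ₀).symm
    _ = D (BD 0 0 c3) (BD 0 0 0) := by rw [hconj, unitary_conj_BD_zero hU]

/-- if |c1| = |c3| then ρ(c1,0,0) and ρ(0,0,c3) are equidistant from the
maximally mixed state. -/
theorem equidistant_from_maximally_mixed
    (D : Mat4 → Mat4 → ℝ) (hD : Contractive D)
    (c1 c3 : ℝ) (hc1 : c1 ∈ Set.Icc (-1 : ℝ) 1) (hc3 : c3 ∈ Set.Icc (-1 : ℝ) 1)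
    (h : |c1| = |c3|) :
    D (BD c1 0 0) (BD 0 0 0) = D (BD 0 0 c3) (BD 0 0 0) :=
  equidistant_from_maximally_mixed_general D hD c1 c3 hc1 h
end
end
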